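/- Let Γ and G be finite nilpotent groups of the same order n. Then the number e'(Γ, G) of regular subgroups of Hol(G) isomorphic to Γ equals the product, over the primes p dividing n, of the numbers e'(Γ_p, G_p) of regular subgroups of Hol(G_p) isomorphic to Γ_p, where Γ_p and G_p denote the Sylow p-subgroups of Γ and G respectively. -/

import Mathlib

/- Formalization of results from "Hopf-Galois structures on extensions of degree p²q and
skew braces of order p²q: the cyclic Sylow p-subgroup case" (Campedel, Caranti, Del Corso).

Conventions: the paper composes permutations/automorphisms left-to-right and writes
`x^α` for the action; in Mathlib composition is right-to-left, so the paper's product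
`αβ` is rendered as `β * α`, the paper's `x^α` as `α x`, and the paper's conjugate
`α^β = β⁻¹αβ` as `β * α * β⁻¹`. -/

namespace HGS

universe u v

variable {G : Type*} [Group G]

/-- The right regular representation `ρ`: `rhoPerm g` is the permutation `x ↦ x * g`. -/
def rhoPerm (g : G) : Equiv.Perm G := Equiv.mulRight g

/-- The image `ρ(G)` of the right regular representation, as a subgroup of `Equiv.Perm G`. -/
def rhoSubgroup (G : Type*) [Group G] : Subgroup (Equiv.Perm G) where
  carrier := Set.range (rhoPerm (G := G))
  one_mem' := ⟨1, by ext x; simp [rhoPerm]⟩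
  mul_mem' := by
    rintro _ _ ⟨g, rfl⟩ ⟨h, rfl⟩
    exact ⟨h * g, by ext x; simp [rhoPerm, Equiv.Perm.mul_apply, mul_assoc]⟩
  inv_mem' := by
    rintro _ ⟨g, rfl⟩
    exact ⟨g⁻¹, by ext x; simp [rhoPerm, Equiv.Perm.inv_def, Equiv.mulRight_symm]⟩

/-- The (permutational) holomorph of `G`: the normalizer in the symmetric group
`Perm G` of the image of the right regular representation. -/
def Hol (G : Type*) [Group G] : Subgroup (Equiv.Perm G) :=
  Subgroup.normalizer (rhoSubgroup G : Set (Equiv.Perm G))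

/-- A subgroup `N ≤ Perm G` is regular if it acts simply transitively on the set `G`. -/
def IsRegularSubgroup (N : Subgroup (Equiv.Perm G)) : Prop :=
  ∀ x y : G, ∃! n : N, (n : Equiv.Perm G) x = y

/-- `eprime Γ G` is the number of regular subgroups of `Hol G` isomorphic to `Γ`. -/
noncomputable def eprime (Γ : Type u) (G : Type v) [Group Γ] [Group G] : ℕ :=
  {N : Subgroup (Equiv.Perm G) | N ≤ Hol G ∧ IsRegularSubgroup N ∧
    Nonempty (N ≃* Γ)}.ncard

/-!
Write `G ≅ ∏ G_p`. As the `G_p` have coprime orders, every automorphism of `G` acts factorwise,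
so `Hol G = ∏ Hol G_p` acting coordinatewise. A regular subgroup `N ≤ Hol G` isomorphic to `Γ`
is nilpotent, so its Sylow `p`-subgroup `N_p` is normal. On a factor `G_q` with `q ≠ p`, `N_p`
has a fixed point because `p ∤ |G_q|`; its fixed points form an `N`-invariant subset, hence all
of `G_q` since `N` is transitive on `G_q`. So `N_p = N ∩ Perm G_p` is regular on `G_p` and
`N = ∏ N_p` with `N_p ≅ Γ_p`; conversely every family of such `N_p` gives back `N = ∏ N_p`.
-/

open Equiv Function

section Holomorph

variable {H H' : Type*} [Group H] [Group H']

@[simp] theorem rhoPerm_apply (g x : H) : rhoPerm g x = x * g := rfl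

theorem toEquiv_mul_rhoPerm_mul_inv (θ : H ≃* H) (g : H) :
    (θ.toEquiv : Perm H) * rhoPerm g * θ.toEquiv⁻¹ = rhoPerm (θ g) := by
  ext x
  simp [Perm.mul_apply, Perm.inv_def]

theorem toEquiv_mem_Hol (θ : H ≃* H) : (θ.toEquiv : Perm H) ∈ Hol H := by
  refine Subgroup.mem_normalizer_iff.2 fun τ => ⟨?_, fun ⟨h, hh⟩ => ⟨θ.symm h, ?_⟩⟩
  · rintro ⟨g, rfl⟩
    exact ⟨θ g, (toEquiv_mul_rhoPerm_mul_inv θ g).symm⟩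
  · have hsymm : (θ.symm.toEquiv : Perm H) = θ.toEquiv⁻¹ := rfl
    rw [← toEquiv_mul_rhoPerm_mul_inv, hsymm, inv_inv, hh]
    group

theorem apply_mul_of_mem_Hol {σ : Perm H} (hσ : σ ∈ Hol H) (x g : H) :
    σ (x * g) = σ x * (σ 1)⁻¹ * σ g := by
  obtain ⟨h, hh⟩ := (Subgroup.mem_normalizer_iff.1 hσ (rhoPerm g)).1 ⟨g, rfl⟩
  have key : ∀ z, σ (z * g) = σ z * h := fun z => by
    simpa [Perm.mul_apply] using congr($hh (σ z)).symm
  have hg : σ g = σ 1 * h := by simpa using key 1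
  rw [key, hg, mul_assoc _ (σ 1)⁻¹, inv_mul_cancel_left]

theorem mem_Hol_iff {σ : Perm H} : σ ∈ Hol H ↔ ∃ θ : H ≃* H, ∀ x, σ x = θ x * σ 1 := by
  constructor
  · intro hσ
    refine ⟨⟨σ.trans (Equiv.mulRight (σ 1)⁻¹), fun a b => ?_⟩, fun x => ?_⟩
    · simp [apply_mul_of_mem_Hol hσ, mul_assoc]
    · simp
  · rintro ⟨θ, hθ⟩
    have hσ : σ = rhoPerm (σ 1) * θ.toEquiv := by
      ext x
      simp [hθ x]
    rw [hσ]
    exact mul_mem (Subgroup.le_normalizer ⟨σ 1, rfl⟩) (toEquiv_mem_Hol θ)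

theorem isRegularSubgroup_iff_bijective (N : Subgroup (Perm H)) :
    IsRegularSubgroup N ↔ Bijective fun ν : N => (ν : Perm H) 1 := by
  refine ⟨fun h => ⟨fun ν μ hνμ => (h 1 _).unique rfl hνμ.symm, fun y => (h 1 y).exists⟩,
    fun h x y => ?_⟩
  obtain ⟨α, rfl⟩ := h.2 x
  have hα : Bijective fun ν : N => ν * α := (Equiv.mulRight α).bijective
  simpa [Perm.mul_apply] using hα.existsUnique_iff.1 (h.existsUnique y)

theorem permCongrHom_rhoPerm (e : H ≃* H') (g : H) :
    e.toEquiv.permCongrHom (rhoPerm g) = rhoPerm (e g) := by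
  ext x
  simp [Equiv.permCongrHom_coe, Equiv.permCongr_apply]

theorem map_permCongrHom_rhoSubgroup (e : H ≃* H') :
    (rhoSubgroup H).map e.toEquiv.permCongrHom.toMonoidHom = rhoSubgroup H' := by
  ext σ
  constructor
  · rintro ⟨_, ⟨g, rfl⟩, rfl⟩
    exact ⟨e g, (permCongrHom_rhoPerm e g).symm⟩
  · rintro ⟨g, rfl⟩
    refine ⟨rhoPerm (e.symm g), ⟨_, rfl⟩, ?_⟩
    rw [MulEquiv.coe_toMonoidHom, permCongrHom_rhoPerm, MulEquiv.apply_symm_apply]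

theorem map_permCongrHom_Hol (e : H ≃* H') :
    (Hol H).map e.toEquiv.permCongrHom.toMonoidHom = Hol H' := by
  rw [Hol, Hol, Subgroup.map_equiv_normalizer_eq, map_permCongrHom_rhoSubgroup]

end Holomorph

section Counting

variable {H H' A : Type*} [Group H] [Group H'] [Group A]

theorem isRegularSubgroup_map_iff {ψ : A →* Perm H} (hψ : Injective ψ) (K : Subgroup A) :
    IsRegularSubgroup (K.map ψ) ↔ Bijective fun k : K => ψ k 1 := by
  rw [isRegularSubgroup_iff_bijective,
    ← (K.equivMapOfInjective ψ hψ).bijective.of_comp_iff]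
  rfl

theorem eprime_eq_ncard {Γ : Type*} [Group Γ] {ψ : A →* Perm H} (hψ : Injective ψ) {L : Subgroup A}
    (hL : L.map ψ = Hol H) :
    eprime Γ H = {K : Subgroup A | K ≤ L ∧ Bijective (fun k : K => ψ k 1) ∧
      Nonempty (K ≃* Γ)}.ncard := by
  rw [eprime, ← Set.ncard_image_of_injective _ (Subgroup.map_injective hψ)]
  congr 1
  ext N
  constructor
  · rintro ⟨hN, hreg, ⟨f⟩⟩
    obtain ⟨K, rfl⟩ : ∃ K : Subgroup A, K.map ψ = N :=
      ⟨_, Subgroup.map_comap_eq_self (hN.trans (hL ▸ Subgroup.map_le_range ψ L))⟩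
    exact ⟨K, ⟨(Subgroup.map_le_map_iff_of_injective hψ).1 (hL ▸ hN),
      (isRegularSubgroup_map_iff hψ K).1 hreg, ⟨(K.equivMapOfInjective ψ hψ).trans f⟩⟩, rfl⟩
  · rintro ⟨K, ⟨hK, hbij, ⟨f⟩⟩, rfl⟩
    exact ⟨hL ▸ Subgroup.map_mono hK, (isRegularSubgroup_map_iff hψ K).2 hbij,
      ⟨(K.equivMapOfInjective ψ hψ).symm.trans f⟩⟩

theorem eprime_congr_right (Γ : Type*) [Group Γ] (e : H ≃* H') :
    eprime Γ H = eprime Γ H' := by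
  rw [eprime_eq_ncard (L := Hol H) injective_id (Subgroup.map_id _),
    eprime_eq_ncard (L := Hol H) e.toEquiv.permCongrHom.injective (map_permCongrHom_Hol e)]
  congr 1
  ext K
  refine and_congr_right fun _ => and_congr_left fun _ => ?_
  have he (k : K) : e.toEquiv.permCongrHom (k : Perm H) 1 = e ((k : Perm H) 1) := by
    simp [Equiv.permCongrHom_coe, Equiv.permCongr_apply]
  simp only [MonoidHom.id_apply, MulEquiv.coe_toMonoidHom, he]
  exact (e.bijective.of_comp_iff' _).symm

end Counting

section Product

variable {ι : Type*}

def permPi {X : ι → Type*} : (∀ i, Perm (X i)) →* Perm (∀ i, X i) where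
  toFun := Equiv.piCongrRight
  map_one' := rfl
  map_mul' _ _ := rfl

@[simp] theorem permPi_apply {X : ι → Type*} (k : ∀ i, Perm (X i)) (x : ∀ i, X i) (i : ι) :
    permPi k x i = k i (x i) := rfl

theorem permPi_injective {X : ι → Type*} [DecidableEq ι] [∀ i, Nonempty (X i)] :
    Injective (permPi (X := X)) := by
  intro k k' h
  ext i a
  simpa using congr($h (update (fun j => Classical.arbitrary (X j)) i a) i)

variable [Fintype ι] [DecidableEq ι] {G : ι → Type*} [∀ i, Group (G i)]

/-- `z` has order prime to `|G i|`. -/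
theorem apply_eq_one_of_apply_eq_one
    (hcop : Pairwise fun i j => (Nat.card (G i)).Coprime (Nat.card (G j)))
    {i : ι} (φ : (∀ j, G j) →* G i) {z : ∀ j, G j} (hz : z i = 1) : φ z = 1 := by
  set m := ∏ j ∈ Finset.univ.erase i, Nat.card (G j)
  have hzm : z ^ m = 1 := by
    funext j
    rcases eq_or_ne j i with rfl | hj
    · simp [hz]
    · obtain ⟨c, hc⟩ : Nat.card (G j) ∣ m := Finset.dvd_prod_of_mem _ (by simp [hj])
      simp [hc, pow_mul, pow_card_eq_one']
  have hm : m.Coprime (Nat.card (G i)) :=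
    Nat.Coprime.prod_left fun j hj => hcop (Finset.ne_of_mem_erase hj)
  exact (pow_eq_one_iff_of_coprime hm).1 ⟨by rw [← map_pow, hzm, map_one], pow_card_eq_one'⟩

theorem exists_eq_piCongrRight [∀ i, Finite (G i)]
    (hcop : Pairwise fun i j => (Nat.card (G i)).Coprime (Nat.card (G j)))
    (θ : (∀ i, G i) ≃* (∀ i, G i)) : ∃ θs : ∀ i, G i ≃* G i, θ = MulEquiv.piCongrRight θs := by
  let ψ i : G i →* G i :=
    (Pi.evalMonoidHom G i).comp (θ.toMonoidHom.comp (MonoidHom.mulSingle G i))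
  have hψ (x : ∀ i, G i) (i : ι) : θ x i = ψ i (x i) := by
    have h1 := apply_eq_one_of_apply_eq_one hcop ((Pi.evalMonoidHom G i).comp θ.toMonoidHom)
      (z := (Pi.mulSingle i (x i))⁻¹ * x) (by simp)
    simp only [MonoidHom.comp_apply, map_mul, map_inv, Pi.evalMonoidHom_apply,
      inv_mul_eq_one] at h1
    exact h1.symm
  have hbij i : Bijective (ψ i) := by
    refine Surjective.bijective_of_finite fun b => ⟨θ.symm (Pi.mulSingle i b) i, ?_⟩
    rw [← hψ]
    simp
  exact ⟨fun i => MulEquiv.ofBijective (ψ i) (hbij i), by ext x i; exact hψ x i⟩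

theorem map_permPi_pi_Hol [∀ i, Finite (G i)]
    (hcop : Pairwise fun i j => (Nat.card (G i)).Coprime (Nat.card (G j))) :
    (Subgroup.pi Set.univ fun i => Hol (G i)).map permPi = Hol (∀ i, G i) := by
  apply le_antisymm
  · rintro _ ⟨k, hk, rfl⟩
    choose θ hθ using fun i => mem_Hol_iff.1 (hk i (Set.mem_univ i))
    exact mem_Hol_iff.2 ⟨MulEquiv.piCongrRight θ, fun x => funext fun i => hθ i (x i)⟩
  · intro σ hσ
    obtain ⟨θ, hθ⟩ := mem_Hol_iff.1 hσ
    obtain ⟨θs, rfl⟩ := exists_eq_piCongrRight hcop θ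
    refine ⟨fun i => (θs i).toEquiv.trans (Equiv.mulRight (σ 1 i)), fun i _ => ?_, ?_⟩
    · exact mem_Hol_iff.2 ⟨θs i, fun a => by simp⟩
    · ext x i
      simp [hθ x]

end Product

theorem IsPGroup.le_ker_of_normal {N X : Type*} [Group N] {p : ℕ} [Fact p.Prime]
    {φ : N →* Perm X} (htrans : ∀ x y, ∃ n, φ n x = y) {P : Subgroup N} [P.Normal]
    (hP : IsPGroup p P) (hpX : ¬ p ∣ Nat.card X) : P ≤ φ.ker := by
  let _ : MulAction P X := MulAction.compHom X (φ.comp P.subtype)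
  obtain ⟨y, hy⟩ := hP.nonempty_fixed_point_of_prime_not_dvd_card X hpX
  intro g hg
  rw [MonoidHom.mem_ker]
  ext x
  obtain ⟨n, rfl⟩ := htrans y x
  have hconj : n⁻¹ * g * n ∈ P := by simpa using ‹P.Normal›.conj_mem g hg n⁻¹
  have hfix : φ (n⁻¹ * g * n) y = y := hy ⟨_, hconj⟩
  calc φ g (φ n y) = φ n (φ (n⁻¹ * g * n) y) := by simp [Perm.mul_apply]
    _ = φ n y := by rw [hfix]

def piUnivMulEquiv {ι : Type*} {G : ι → Type*} [∀ i, Group (G i)] (M : ∀ i, Subgroup (G i)) :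
    Subgroup.pi Set.univ M ≃* ∀ i, M i where
  toFun k i := ⟨(k : ∀ i, G i) i, k.2 i (Set.mem_univ i)⟩
  invFun k := ⟨fun i => k i, fun i _ => (k i).2⟩
  left_inv _ := rfl
  right_inv _ := rfl
  map_mul' _ _ := rfl

section Regular

variable {ι : Type*} {X : ι → Type*} {K : Subgroup (∀ i, Perm (X i))} {x₀ : ∀ i, X i}
  {p : ι → ℕ} [hp : ∀ i, Fact (p i).Prime] {e : ι → ℕ}

theorem card_le_card_sylow [Fintype ι] [∀ i, Finite (X i)] (hX : ∀ i, Nat.card (X i) = p i ^ e i)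
    (hK : Bijective fun k : K => permPi (k : ∀ i, Perm (X i)) x₀) {i : ι} (P : Sylow (p i) K) :
    Nat.card (X i) ≤ Nat.card P := by
  have hcard : Nat.card K = ∏ j, Nat.card (X j) := by
    rw [Nat.card_eq_of_bijective _ hK, Nat.card_pi]
  have hdvd : p i ^ e i ∣ Nat.card K :=
    hX i ▸ hcard ▸ Finset.dvd_prod_of_mem _ (Finset.mem_univ i)
  exact hX i ▸ Nat.le_of_dvd Nat.card_pos (P.pow_dvd_card_of_pow_dvd_card hdvd)

variable [DecidableEq ι]

/-- `K ∩ Perm (X i)`, with `Perm (X i)` embedded as the `i`-th factor. -/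
abbrev factor (K : Subgroup (∀ i, Perm (X i))) (i : ι) : Subgroup (Perm (X i)) :=
  K.comap (MonoidHom.mulSingle (fun i => Perm (X i)) i)

theorem exists_apply_eq (hK : Surjective fun k : K => permPi (k : ∀ i, Perm (X i)) x₀)
    (j : ι) (a b : X j) : ∃ k : K, (k : ∀ i, Perm (X i)) j a = b := by
  obtain ⟨ka, ha⟩ := hK (update x₀ j a)
  obtain ⟨kb, hb⟩ := hK (update x₀ j b)
  have ha' : (ka : ∀ i, Perm (X i)) j (x₀ j) = a := by simpa using congr_fun ha j
  have hb' : (kb : ∀ i, Perm (X i)) j (x₀ j) = b := by simpa using congr_fun hb j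
  refine ⟨kb * ka⁻¹, ?_⟩
  simp [Perm.mul_apply, Perm.inv_eq_iff_eq.2 ha'.symm, hb']

theorem factor_eval_injective (hK : Injective fun k : K => permPi (k : ∀ i, Perm (X i)) x₀)
    (i : ι) : Injective fun σ : factor K i => (σ : Perm (X i)) (x₀ i) := by
  intro σ τ hστ
  have h : (⟨_, σ.2⟩ : K) = ⟨_, τ.2⟩ := hK <| funext fun j => by
    rcases eq_or_ne j i with rfl | hj
    · simpa using hστ
    · simp [Pi.mulSingle_eq_of_ne hj]
  exact Subtype.ext (Pi.mulSingle_injective i (congr_arg Subtype.val h))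

variable [Fintype ι] [∀ i, Finite (X i)] [Group.IsNilpotent K]
  (hp_inj : Injective p) (hX : ∀ i, Nat.card (X i) = p i ^ e i)
include hp_inj hX

theorem apply_eq_one_of_mem_sylow (hK : Surjective fun k : K => permPi (k : ∀ i, Perm (X i)) x₀)
    {i j : ι} (hij : j ≠ i) (P : Sylow (p i) K) {k : K} (hk : k ∈ P) :
    (k : ∀ i, Perm (X i)) j = 1 := by
  have hpX : ¬ p i ∣ Nat.card (X j) := fun h => hij <| hp_inj <|
    ((Nat.prime_dvd_prime_iff_eq (hp i).out (hp j).out).1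
      ((hp i).out.dvd_of_dvd_pow (hX j ▸ h))).symm
  exact IsPGroup.le_ker_of_normal (φ := (Pi.evalMonoidHom _ j).comp K.subtype)
    (exists_apply_eq hK j) P.isPGroup' hpX hk

theorem map_subtype_sylow_le (hK : Surjective fun k : K => permPi (k : ∀ i, Perm (X i)) x₀)
    {i : ι} (P : Sylow (p i) K) :
    (P : Subgroup K).map K.subtype ≤
      (factor K i).map (MonoidHom.mulSingle (fun i => Perm (X i)) i) := by
  rintro _ ⟨k, hk, rfl⟩
  have hsingle : Pi.mulSingle i ((k : ∀ i, Perm (X i)) i) = (k : ∀ i, Perm (X i)) :=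
    funext fun j => by
      rcases eq_or_ne j i with rfl | hj
      · simp
      · simp [Pi.mulSingle_eq_of_ne hj, apply_eq_one_of_mem_sylow hp_inj hX hK hj P hk]
  exact ⟨_, by simp [hsingle], hsingle⟩

theorem card_factor (hK : Bijective fun k : K => permPi (k : ∀ i, Perm (X i)) x₀) (i : ι) :
    Nat.card (factor K i) = Nat.card (X i) := by
  refine le_antisymm (Nat.card_le_card_of_injective _ (factor_eval_injective hK.1 i)) ?_
  let P : Sylow (p i) K := default
  calc Nat.card (X i) ≤ Nat.card P := card_le_card_sylow hX hK P
    _ = Nat.card ((P : Subgroup K).map K.subtype) :=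
      (Subgroup.card_map_of_injective K.subtype_injective).symm
    _ ≤ Nat.card ((factor K i).map (MonoidHom.mulSingle (fun i => Perm (X i)) i)) :=
      Subgroup.card_le_of_le (map_subtype_sylow_le hp_inj hX hK.2 P)
    _ = Nat.card (factor K i) :=
      Subgroup.card_map_of_injective (Pi.mulSingle_injective (M := fun i => Perm (X i)) i)

theorem factor_bijective (hK : Bijective fun k : K => permPi (k : ∀ i, Perm (X i)) x₀) (i : ι) :
    Bijective fun σ : factor K i => (σ : Perm (X i)) (x₀ i) :=
  (Nat.bijective_iff_injective_and_card _).2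
    ⟨factor_eval_injective hK.1 i, card_factor hp_inj hX hK i⟩

theorem nonempty_factor_mulEquiv_sylow
    (hK : Bijective fun k : K => permPi (k : ∀ i, Perm (X i)) x₀) {i : ι} (P : Sylow (p i) K) :
    Nonempty (factor K i ≃* P) := by
  have hinj : Injective (MonoidHom.mulSingle (fun i => Perm (X i)) i) :=
    Pi.mulSingle_injective (M := fun i => Perm (X i)) i
  have heq : (P : Subgroup K).map K.subtype =
      (factor K i).map (MonoidHom.mulSingle (fun i => Perm (X i)) i) := by
    refine Subgroup.eq_of_le_of_card_ge (map_subtype_sylow_le hp_inj hX hK.2 P) ?_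
    rw [Subgroup.card_map_of_injective hinj, Subgroup.card_map_of_injective K.subtype_injective,
      card_factor hp_inj hX hK i]
    exact card_le_card_sylow hX hK P
  exact ⟨((factor K i).equivMapOfInjective _ hinj).trans ((MulEquiv.subgroupCongr heq.symm).trans
    ((P : Subgroup K).equivMapOfInjective _ K.subtype_injective).symm)⟩

theorem pi_factor_eq (hK : Bijective fun k : K => permPi (k : ∀ i, Perm (X i)) x₀) :
    Subgroup.pi Set.univ (factor K) = K := by
  refine Subgroup.eq_of_le_of_card_ge
    (Subgroup.pi_le_iff.2 fun i => Subgroup.map_comap_le _ _) ?_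
  rw [Nat.card_eq_of_bijective _ hK, Nat.card_pi, Nat.card_congr (piUnivMulEquiv _).toEquiv,
    Nat.card_pi]
  exact (Finset.prod_congr rfl fun i _ => card_factor hp_inj hX hK i).ge

end Regular

section PiSubgroup

variable {ι : Type*} {X : ι → Type*}

theorem factor_pi [DecidableEq ι] (M : ∀ i, Subgroup (Perm (X i))) (i : ι) :
    factor (Subgroup.pi Set.univ M) i = M i := by
  ext σ
  simp [Subgroup.mulSingle_mem_pi]

theorem pi_bijective {x₀ : ∀ i, X i} (M : ∀ i, Subgroup (Perm (X i)))
    (hM : ∀ i, Bijective fun σ : M i => (σ : Perm (X i)) (x₀ i)) :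
    Bijective fun k : Subgroup.pi Set.univ M => permPi (k : ∀ i, Perm (X i)) x₀ :=
  (Bijective.piMap hM).comp (piUnivMulEquiv M).bijective

end PiSubgroup

theorem Sylow.nonempty_mulEquiv {A B : Type*} [Group A] [Group B] [Finite A] [Finite B] {p : ℕ}
    [Fact p.Prime] (e : A ≃* B) (P : Sylow p A) (Q : Sylow p B) : Nonempty (P ≃* Q) :=
  ⟨((P : Subgroup A).equivMapOfInjective e.toMonoidHom e.injective).trans
    (Sylow.equiv (P.mapSurjective (f := e.toMonoidHom) e.surjective) Q)⟩

theorem pairwise_coprime_card {ι : Type*} {X : ι → Type*} {p : ι → ℕ} [∀ i, Fact (p i).Prime]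
    (hp_inj : Injective p) {e : ι → ℕ} (hX : ∀ i, Nat.card (X i) = p i ^ e i) :
    Pairwise fun i j => (Nat.card (X i)).Coprime (Nat.card (X j)) := fun i j hij => by
  simp only [hX]
  exact Nat.coprime_pow_primes _ _ Fact.out Fact.out (hp_inj.ne hij)

theorem eprime_pi {ι : Type*} [Fintype ι] [DecidableEq ι] {p : ι → ℕ} [∀ i, Fact (p i).Prime]
    (hp_inj : Injective p) {Γ : Type*} [Group Γ] [Finite Γ] [Group.IsNilpotent Γ]
    (PΓ : ∀ i, Sylow (p i) Γ) (eΓ : Γ ≃* ∀ i, (PΓ i : Subgroup Γ)) {G : ι → Type*}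
    [∀ i, Group (G i)] [∀ i, Finite (G i)] {e : ι → ℕ} (hG : ∀ i, Nat.card (G i) = p i ^ e i) :
    eprime Γ (∀ i, G i) = ∏ i, eprime (PΓ i) (G i) := by
  let S := {K : Subgroup (∀ i, Perm (G i)) | K ≤ Subgroup.pi Set.univ (fun i => Hol (G i)) ∧
    Bijective (fun k : K => permPi (k : ∀ i, Perm (G i)) 1) ∧ Nonempty (K ≃* Γ)}
  let T i := {M : Subgroup (Perm (G i)) | M ≤ Hol (G i) ∧ IsRegularSubgroup M ∧
    Nonempty (M ≃* PΓ i)}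
  have factor_mem : ∀ K ∈ S, ∀ i, factor K i ∈ T i := by
    rintro K ⟨hHol, hK, ⟨f⟩⟩ i
    have := Group.nilpotent_of_mulEquiv f.symm
    obtain ⟨g⟩ := nonempty_factor_mulEquiv_sylow hp_inj hG hK (default : Sylow (p i) K)
    obtain ⟨h⟩ := Sylow.nonempty_mulEquiv f default (PΓ i)
    exact ⟨fun σ hσ => by simpa using hHol hσ i (Set.mem_univ i),
      (isRegularSubgroup_iff_bijective _).2 (factor_bijective hp_inj hG hK i), ⟨g.trans h⟩⟩
  have pi_mem (M : ∀ i, Subgroup (Perm (G i))) (hM : ∀ i, M i ∈ T i) :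
      Subgroup.pi Set.univ M ∈ S := by
    choose hHol hreg hiso using hM
    exact ⟨fun k hk i _ => hHol i (hk i (Set.mem_univ i)),
      pi_bijective M fun i => (isRegularSubgroup_iff_bijective _).1 (hreg i),
      ⟨(piUnivMulEquiv M).trans
        ((MulEquiv.piCongrRight fun i => (hiso i).some).trans eΓ.symm)⟩⟩
  let E : S ≃ ∀ i, T i :=
    { toFun K i := ⟨factor K i, factor_mem K K.2 i⟩
      invFun M := ⟨Subgroup.pi Set.univ fun i => M i, pi_mem _ fun i => (M i).2⟩
      left_inv K := by
        obtain ⟨-, hK, ⟨f⟩⟩ := K.2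
        have := Group.nilpotent_of_mulEquiv f.symm
        exact Subtype.ext (pi_factor_eq hp_inj hG hK)
      right_inv M := funext fun i => Subtype.ext (factor_pi _ i) }
  rw [eprime_eq_ncard permPi_injective (map_permPi_pi_Hol (pairwise_coprime_card hp_inj hG)),
    ← Nat.card_coe_set_eq, Nat.card_congr E, Nat.card_pi]
  exact Finset.prod_congr rfl fun i _ => Nat.card_coe_set_eq (T i)

theorem nonempty_mulEquiv_pi_sylow {G : Type*} [Group G] [Finite G] [Group.IsNilpotent G] {n : ℕ}
    (hn : Nat.card G = n) (P : ∀ p, Sylow p G) :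
    Nonempty (G ≃* ∀ p : n.primeFactors, (P p : Subgroup G)) := by
  subst hn
  refine ⟨(Sylow.directProductOfNormal fun _ => inferInstance).symm.trans
    (MulEquiv.piCongrRight fun p => ?_)⟩
  have : Fact (p : ℕ).Prime := ⟨Nat.prime_of_mem_primeFactors p.2⟩
  letI : Unique (Sylow p G) := Sylow.unique_of_normal (P p) inferInstance
  exact (MulEquiv.piUnique _).trans
    (MulEquiv.subgroupCongr (by rw [Subsingleton.elim default (P p)]))

/-- Byott's theorem, as in Subsection 2.4 of the paper, rephrased as
`e'(Γ, G) = ∏_p e'(Γ_p, G_p)`.  For finite nilpotent groups `Γ`, `G` of the same order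
`n`, the number of regular subgroups of `Hol G` isomorphic to `Γ` is the product over the
primes `p ∣ n` of the numbers of regular subgroups of `Hol G_p` isomorphic to `Γ_p`. -/
theorem eprime_nilpotent_product
    {Γ : Type u} {G : Type v} [Group Γ] [Group G] [Finite Γ] [Finite G]
    (hΓnil : Group.IsNilpotent Γ) (hGnil : Group.IsNilpotent G)
    {n : ℕ} (hΓ : Nat.card Γ = n) (hG : Nat.card G = n)
    (PΓ : ∀ p : ℕ, Sylow p Γ) (PG : ∀ p : ℕ, Sylow p G) :
    eprime Γ G = ∏ p ∈ n.primeFactors, eprime (PΓ p) (PG p) := by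
  have (p : n.primeFactors) : Fact (p : ℕ).Prime := ⟨Nat.prime_of_mem_primeFactors p.2⟩
  obtain ⟨eΓ⟩ := nonempty_mulEquiv_pi_sylow hΓ PΓ
  obtain ⟨eG⟩ := nonempty_mulEquiv_pi_sylow hG PG
  have hcard (p : n.primeFactors) : Nat.card (PG p) = (p : ℕ) ^ n.factorization p := by
    rw [(PG p).card_eq_multiplicity, hG]
  rw [eprime_congr_right Γ eG, eprime_pi Subtype.val_injective (fun p => PΓ p) eΓ hcard]
  exact Finset.prod_coe_sort n.primeFactors fun p => eprime (PΓ p) (PG p)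
end HGS
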